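/- Let f : ℝ → ℝ be twice continuously differentiable (ContDiff ℝ 2). Let X = C(AddCircle (2π), ℝ) with the supremum norm and μ the Haar measure on AddCircle (2π), and define F : X → ℝ by F(u) = ∫ f(u(θ)) dμ(θ). Then there is a map D : X → (X →L[ℝ] ℝ) with D(u)(v) = ∫ f′(u(θ))·v(θ) dμ(θ), such that for every u ∈ X: F is Fréchet differentiable at u with derivative D(u), and D is Fréchet differentiable at u with derivative the continuous bilinear map (v, w) ↦ ∫ f″(u(θ))·v(θ)·w(θ) dμ(θ). -/

import Mathlib

/-!
`F` is the integral, a continuous linear functional on `C(S¹, ℝ)`, composed with the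
superposition operator `u ↦ f ∘ u`, and `D` is the continuous bilinear pairing `(h, w) ↦ ∫ h w`
composed with `u ↦ f′ ∘ u`. Both claims therefore follow from the chain rule once one knows that
on `C(α, ℝ)`, `α` compact, `u ↦ g ∘ u` has Fréchet derivative `v ↦ (g′ ∘ u) v` for every `C¹`
function `g`. That holds because `g′` is uniformly continuous near the compact range of `u`, so
the first-order Taylor remainder of `g` is uniformly small along `u`.
-/

open Real MeasureTheory

instance : Fact (0 < 2 * π) := ⟨by positivity⟩

theorem IsCompact.exists_forall_abs_sub_sub_le_of_hasDerivAt {g g' : ℝ → ℝ}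
    (hg : ∀ x, HasDerivAt g (g' x) x) (hg' : Continuous g') {K : Set ℝ} (hK : IsCompact K)
    {ε : ℝ} (hε : 0 < ε) :
    ∃ δ > 0, ∀ a ∈ K, ∀ t, |t| < δ → |g (a + t) - g a - g' a * t| ≤ ε * |t| := by
  obtain ⟨δ, hδ, hg'_unif⟩ := Metric.uniformContinuousOn_iff_le.mp
    ((hK.cthickening (r := 1)).uniformContinuousOn_of_continuous hg'.continuousOn) ε hε
  refine ⟨min δ 1, by positivity, fun a ha t ht => ?_⟩
  have hclose : ∀ x ∈ Metric.ball a (min δ 1), |g' x - g' a| ≤ ε := fun x hx =>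
    hg'_unif x (Metric.mem_cthickening_of_dist_le x a 1 K ha (hx.out.le.trans (min_le_right _ _)))
      a (Metric.self_subset_cthickening K ha) (hx.out.le.trans (min_le_left _ _))
  have hmean_value := (convex_ball a (min δ 1)).norm_image_sub_le_of_norm_hasDerivWithin_le
    (f := fun x => g x - g' a * x)
    (fun x _ => ((hg x).sub ((hasDerivAt_id x).const_mul (g' a))).hasDerivWithinAt)
    (fun x hx => by simpa using hclose x hx) (Metric.mem_ball_self (by positivity))
    (y := a + t) (by simpa [Metric.mem_ball, dist_eq] using ht)
  have hremainder : g (a + t) - g' a * (a + t) - (g a - g' a * a) = g (a + t) - g a - g' a * t := by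
    ring
  simpa only [Real.norm_eq_abs, hremainder, add_sub_cancel_left] using hmean_value

namespace ContinuousMap

variable {α : Type*} [TopologicalSpace α] [CompactSpace α]

theorem hasFDerivAt_comp_left {g g' : C(ℝ, ℝ)} (hg : ∀ x, HasDerivAt g (g' x) x)
    (u : C(α, ℝ)) :
    HasFDerivAt (fun u : C(α, ℝ) => g.comp u)
      (ContinuousLinearMap.mul ℝ C(α, ℝ) (g'.comp u)) u := by
  rw [hasFDerivAt_iff_isLittleO_nhds_zero, Asymptotics.isLittleO_iff]
  intro ε hε
  obtain ⟨δ, hδ, hest⟩ := (isCompact_range u.continuous).exists_forall_abs_sub_sub_le_of_hasDerivAt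
    hg g'.continuous hε
  filter_upwards [Metric.ball_mem_nhds 0 hδ] with v hv
  refine (norm_le _ (by positivity)).mpr fun x => ?_
  have hvx : |v x| ≤ ‖v‖ := v.norm_coe_le_norm x
  calc |g (u x + v x) - g (u x) - g' (u x) * v x|
      ≤ ε * |v x| := hest _ (Set.mem_range_self x) _ (hvx.trans_lt (mem_ball_zero_iff.mp hv))
    _ ≤ ε * ‖v‖ := by gcongr

variable [MeasurableSpace α] [BorelSpace α] (μ : Measure α) [IsFiniteMeasure μ]

noncomputable def integralCLM : C(α, ℝ) →L[ℝ] ℝ :=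
  L1.integralCLM ∘L toLp 1 μ ℝ

theorem integralCLM_apply (h : C(α, ℝ)) : integralCLM μ h = ∫ x, h x ∂μ := by
  rw [integralCLM, ContinuousLinearMap.comp_apply, ← L1.integral_def, L1.integral_eq_integral]
  exact integral_congr_ae (coeFn_toLp μ h)

noncomputable def integralMulCLM : C(α, ℝ) →L[ℝ] C(α, ℝ) →L[ℝ] ℝ :=
  ContinuousLinearMap.compL ℝ _ _ ℝ (integralCLM μ) ∘L ContinuousLinearMap.mul ℝ C(α, ℝ)

theorem integralMulCLM_apply (h w : C(α, ℝ)) : integralMulCLM μ h w = ∫ x, h x * w x ∂μ :=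
  integralCLM_apply μ (h * w)

end ContinuousMap

/-- For `f : ℝ → ℝ` twice continuously differentiable, the nonlinear functional
`F(u) = ∫_{S¹} f(u(θ)) dθ` on the Banach space `C(S¹, ℝ)` of continuous functions on the
circle `S¹ = ℝ/2πℤ` (supremum norm, Haar measure) has first derivative
`D(u)(v) = ∫ f′(u(θ))·v(θ) dθ` at every `u`, and the map `D` is itself Fréchet
differentiable at every `u` with derivative the continuous bilinear map
`(v, w) ↦ ∫ f″(u(θ))·v(θ)·w(θ) dθ`. -/
theorem second_derivative_of_loop_functional
    (f : ℝ → ℝ) (hf : ContDiff ℝ 2 f)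
    (F : C(AddCircle (2 * π), ℝ) → ℝ)
    (hF : ∀ u : C(AddCircle (2 * π), ℝ), F u = ∫ θ : AddCircle (2 * π), f (u θ)) :
    ∃ D : C(AddCircle (2 * π), ℝ) → (C(AddCircle (2 * π), ℝ) →L[ℝ] ℝ),
      (∀ u v : C(AddCircle (2 * π), ℝ),
        D u v = ∫ θ : AddCircle (2 * π), deriv f (u θ) * v θ) ∧
      (∀ u : C(AddCircle (2 * π), ℝ),
        HasFDerivAt F (D u) u ∧
        ∃ B : C(AddCircle (2 * π), ℝ) →L[ℝ] (C(AddCircle (2 * π), ℝ) →L[ℝ] ℝ),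
          (∀ v w : C(AddCircle (2 * π), ℝ),
            B v w = ∫ θ : AddCircle (2 * π), deriv (deriv f) (u θ) * v θ * w θ) ∧
          HasFDerivAt D B u) := by
  have hf' : ContDiff ℝ 1 (deriv f) := hf.deriv'
  let f₀ : C(ℝ, ℝ) := ⟨f, hf.continuous⟩
  let f₁ : C(ℝ, ℝ) := ⟨deriv f, hf'.continuous⟩
  let f₂ : C(ℝ, ℝ) := ⟨deriv (deriv f), hf'.continuous_deriv_one⟩
  have hf₀ : ∀ x, HasDerivAt f₀ (f₁ x) x := fun x =>
    ((hf.differentiable two_ne_zero) x).hasDerivAt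
  have hf₁ : ∀ x, HasDerivAt f₁ (f₂ x) x := fun x =>
    ((hf'.differentiable one_ne_zero) x).hasDerivAt
  have hF_eq : F = ContinuousMap.integralCLM volume ∘ fun u => f₀.comp u :=
    funext fun u => by rw [hF, Function.comp_apply, ContinuousMap.integralCLM_apply]; rfl
  refine ⟨fun u => ContinuousMap.integralMulCLM volume (f₁.comp u),
    fun u v => ContinuousMap.integralMulCLM_apply volume _ v, fun u => ⟨?_, ?_⟩⟩
  · rw [hF_eq]
    exact (ContinuousMap.integralCLM volume).hasFDerivAt.comp u
      (ContinuousMap.hasFDerivAt_comp_left hf₀ u)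
  · refine ⟨ContinuousMap.integralMulCLM volume ∘L ContinuousLinearMap.mul ℝ _ (f₂.comp u),
      fun v w => ContinuousMap.integralMulCLM_apply volume _ w, ?_⟩
    -- Without `G`, unification must match the compact-open topology of `C(S¹, ℝ)` in the type
    -- of `integralMulCLM` against the norm topology of a not yet known normed space.
    exact (ContinuousMap.integralMulCLM volume).hasFDerivAt.comp
      (G := C(AddCircle (2 * π), ℝ) →L[ℝ] ℝ) u (ContinuousMap.hasFDerivAt_comp_left hf₁ u)
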